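/- The family 𝔅^Z = {B_ε(x) \ C^L(x) : x ∈ M, ε > 0} (Euclidean balls with the light cone of their centre removed, retaining the centre) in Minkowski space is a topological basis, and the topology Z it generates equals the intersection topology of T^→ and the Euclidean topology T_E, i.e. Z is the topology generated by the family {V ∩ U : V is T^→-open, U is T_E-open}. -/
import Mathlib


noncomputable section

open TopologicalSpace Filter

/-- Minkowski space `M = ℝ × ℝ³`. -/
abbrev Mink : Type := ℝ × EuclideanSpace ℝ (Fin 3)

/-- The Euclidean (product) topology on `M`. -/
def TE : TopologicalSpace Mink := inferInstance

/-- Time difference Δt(x,y). -/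
def dtime (x y : Mink) : ℝ := y.1 - x.1

/-- Spatial distance Δr(x,y). -/
def dspace (x y : Mink) : ℝ := ‖y.2 - x.2‖

/-- Chronological order `x ≪ y`. -/
def Chron (x y : Mink) : Prop := dspace x y < dtime x y

/-- Causal order `x ≺ y`. -/
def Causal (x y : Mink) : Prop := dspace x y ≤ dtime x y

/-- Euclidean open ball of radius ε about x. -/
def eball (x : Mink) (ε : ℝ) : Set Mink :=
  {y | Real.sqrt ((y.1 - x.1) ^ 2 + ‖y.2 - x.2‖ ^ 2) < ε}

/-- Time cone `C^T(x)`. -/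
def timeCone (x : Mink) : Set Mink := {x} ∪ {y | Chron x y ∨ Chron y x}

/-- Space cone `C^S(x)`. -/
def spaceCone (x : Mink) : Set Mink := {x} ∪ {y | |dtime x y| < dspace x y}

/-- Light cone `C^L(x)`. -/
def lightCone (x : Mink) : Set Mink := {y | y ≠ x ∧ |dtime x y| = dspace x y}

/-- Causal cone `C^J(x)`. -/
def causalCone (x : Mink) : Set Mink := {x} ∪ {y | Causal x y ∨ Causal y x}

/-- Closed space cone `K^S(x)` (space cone together with the light cone). -/
def closedSpaceCone (x : Mink) : Set Mink := {x} ∪ {y | |dtime x y| ≤ dspace x y}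

/-- Bounded time cones, the defining family of `Z^T`. -/
def BasisT : Set (Set Mink) := {S | ∃ x ε, 0 < ε ∧ S = timeCone x ∩ eball x ε}

/-- Bounded space cones, the defining family of `Z^S`. -/
def BasisS : Set (Set Mink) := {S | ∃ x ε, 0 < ε ∧ S = spaceCone x ∩ eball x ε}

/-- Balls with the light cone of the centre removed, the defining family of `Z`. -/
def BasisZ : Set (Set Mink) := {S | ∃ x ε, 0 < ε ∧ S = eball x ε \ lightCone x}

/-- Zeeman's topology `Z^T` (the Minkowski analogue of the path topology). -/
def ZT : TopologicalSpace Mink := TopologicalSpace.generateFrom BasisT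

/-- The topology `Z^S`. -/
def ZS : TopologicalSpace Mink := TopologicalSpace.generateFrom BasisS

/-- The topology `Z`. -/
def Ztop : TopologicalSpace Mink := TopologicalSpace.generateFrom BasisZ

def Jplus (x : Mink) : Set Mink := {y | Causal x y}
def Jminus (x : Mink) : Set Mink := {y | Causal y x}
def Nplus (x : Mink) : Set Mink := {y | y ≠ x ∧ dtime x y = dspace x y}
def Nminus (x : Mink) : Set Mink := {y | y ≠ x ∧ -dtime x y = dspace x y}

/-- The interval topology `T^tc` whose subbasic open sets are time cones. -/
def Ttc : TopologicalSpace Mink :=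
  TopologicalSpace.generateFrom {S | ∃ x, S = timeCone x}

/-- The interval topology `T^≪` of the irreflexive causal order. -/
def Tll : TopologicalSpace Mink :=
  TopologicalSpace.generateFrom
    ({S | ∃ x, S = Set.univ \ (Jplus x \ {x})} ∪ {S | ∃ x, S = Set.univ \ (Jminus x \ {x})})

/-- The interval topology `T^→` of irreflexive horismos. -/
def Thor : TopologicalSpace Mink :=
  TopologicalSpace.generateFrom
    ({S | ∃ x, S = Set.univ \ Nplus x} ∪ {S | ∃ x, S = Set.univ \ Nminus x})

/-- The topology `(Z^T)′` generated by bounded causal cones. -/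
def ZT' : TopologicalSpace Mink :=
  TopologicalSpace.generateFrom {S | ∃ x ε, 0 < ε ∧ S = causalCone x ∩ eball x ε}

/-- The topology `(Z^S)′` generated by bounded closed space cones. -/
def ZS' : TopologicalSpace Mink :=
  TopologicalSpace.generateFrom {S | ∃ x ε, 0 < ε ∧ S = closedSpaceCone x ∩ eball x ε}

/-- The topology `(T^tc)′` generated by causal cones. -/
def Ttc' : TopologicalSpace Mink :=
  TopologicalSpace.generateFrom {S | ∃ x, S = causalCone x}

/-- The topology `(T^≪)′` generated by closed space cones. -/
def Tll' : TopologicalSpace Mink :=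
  TopologicalSpace.generateFrom {S | ∃ x, S = closedSpaceCone x}

/-- An endless causal curve. -/
def EndlessCausalCurve (γ : ℝ → Mink) : Prop :=
  Continuous γ ∧ (∀ s t : ℝ, s < t → Causal (γ s) (γ t) ∧ γ s ≠ γ t) ∧
    (∀ c : ℝ, ∃ t, c < (γ t).1) ∧ (∀ c : ℝ, ∃ t, (γ t).1 < c)

/-- `γ` is a `T`-limit curve of the sequence `γs` of curves. -/
def IsLimitCurve (T : TopologicalSpace Mink) (γ : ℝ → Mink) (γs : ℕ → ℝ → Mink) : Prop :=
  ∃ nk : ℕ → ℕ, StrictMono nk ∧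
    ∀ p ∈ Set.range γ, ∃ pk : ℕ → Mink,
      (∀ k, pk k ∈ Set.range (γs (nk k))) ∧ Filter.Tendsto pk Filter.atTop (@nhds Mink T p)

/-! ### Auxiliary lemmas -/

lemma eball_isOpen (x : Mink) (ε : ℝ) : IsOpen (eball x ε) := by
  apply isOpen_lt _ continuous_const
  exact ((continuous_fst.sub continuous_const).pow 2 |>.add
    (((continuous_snd.sub continuous_const).norm).pow 2)).sqrt

lemma self_mem_eball {x : Mink} {ε : ℝ} (hε : 0 < ε) : x ∈ eball x ε := by
  simp [eball, hε]

lemma eball_mono {p : Mink} {δ δ' : ℝ} (h : δ ≤ δ') : eball p δ ⊆ eball p δ' :=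
  fun _ hy => lt_of_lt_of_le hy h

lemma self_not_mem_lightCone (x : Mink) : x ∉ lightCone x := fun h => h.1 rfl

lemma eball_subset_ball (x : Mink) (ε : ℝ) : eball x ε ⊆ Metric.ball x ε := by
  intro y hy
  have h1 : |y.1 - x.1| ≤ Real.sqrt ((y.1 - x.1) ^ 2 + ‖y.2 - x.2‖ ^ 2) := by
    rw [← Real.sqrt_sq_eq_abs]
    exact Real.sqrt_le_sqrt (le_add_of_nonneg_right (sq_nonneg _))
  have h2 : ‖y.2 - x.2‖ ≤ Real.sqrt ((y.1 - x.1) ^ 2 + ‖y.2 - x.2‖ ^ 2) := by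
    have h := Real.sqrt_le_sqrt
      (le_add_of_nonneg_left (sq_nonneg (y.1 - x.1)) :
        ‖y.2 - x.2‖ ^ 2 ≤ (y.1 - x.1) ^ 2 + ‖y.2 - x.2‖ ^ 2)
    rwa [Real.sqrt_sq (norm_nonneg _)] at h
  have hy' : Real.sqrt ((y.1 - x.1) ^ 2 + ‖y.2 - x.2‖ ^ 2) < ε := hy
  rw [Metric.mem_ball, Prod.dist_eq, max_lt_iff]
  constructor
  · rw [Real.dist_eq]; linarith
  · rw [dist_eq_norm]; linarith

lemma exists_eball_subset {U : Set Mink} (hU : IsOpen U) {p : Mink} (hp : p ∈ U) :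
    ∃ δ > 0, eball p δ ⊆ U := by
  obtain ⟨ε, hε, hsub⟩ := Metric.isOpen_iff.mp hU p hp
  exact ⟨ε, hε, (eball_subset_ball p ε).trans hsub⟩

lemma ztop_isOpen_of (U : Set Mink)
    (h : ∀ p ∈ U, ∃ δ > 0, eball p δ \ lightCone p ⊆ U) : Ztop.IsOpen U := by
  have hU : U = ⋃₀ {S | S ∈ BasisZ ∧ S ⊆ U} := by
    ext q
    constructor
    · intro hq
      obtain ⟨δ, hδ, hsub⟩ := h q hq
      exact ⟨eball q δ \ lightCone q, ⟨⟨q, δ, hδ, rfl⟩, hsub⟩,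
        ⟨self_mem_eball hδ, self_not_mem_lightCone q⟩⟩
    · rintro ⟨S, ⟨_, hS⟩, hq⟩
      exact hS hq
  rw [hU]
  exact TopologicalSpace.GenerateOpen.sUnion _ fun S hS => .basic S hS.1

lemma key_shrink (x : Mink) (ε : ℝ) (p : Mink) (hp : p ∈ eball x ε \ lightCone x) :
    ∃ δ > 0, eball p δ \ lightCone p ⊆ eball x ε \ lightCone x := by
  by_cases hpx : p = x
  · subst hpx
    obtain ⟨δ, hδ, hsub⟩ := exists_eball_subset (eball_isOpen p ε) hp.1
    exact ⟨δ, hδ, fun y hy => ⟨hsub hy.1, hy.2⟩⟩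
  · have hF : IsClosed {y : Mink | |dtime x y| = dspace x y} :=
      isClosed_eq ((continuous_fst.sub continuous_const).abs)
        ((continuous_snd.sub continuous_const).norm)
    have hpF : p ∈ eball x ε ∩ {y : Mink | |dtime x y| = dspace x y}ᶜ :=
      ⟨hp.1, fun h => hp.2 ⟨hpx, h⟩⟩
    obtain ⟨δ, hδ, hsub⟩ :=
      exists_eball_subset ((eball_isOpen x ε).inter hF.isOpen_compl) hpF
    refine ⟨δ, hδ, fun y hy => ⟨(hsub hy.1).1, fun hyL => (hsub hy.1).2 hyL.2⟩⟩

lemma ztop_open_compl (x : Mink) (N F : Set Mink) (hNF : N ⊆ F) (hF : IsClosed F)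
    (hNl : N ⊆ lightCone x) (hFx : F ⊆ N ∪ {x}) : Ztop.IsOpen Nᶜ := by
  apply ztop_isOpen_of
  intro p hp
  by_cases hpx : p = x
  · subst hpx
    exact ⟨1, one_pos, fun y hy hyN => hy.2 (hNl hyN)⟩
  · have hpF : p ∉ F := fun h => by
      rcases hFx h with h | h
      · exact hp h
      · exact hpx h
    obtain ⟨δ, hδ, hsub⟩ := exists_eball_subset hF.isOpen_compl hpF
    exact ⟨δ, hδ, fun y hy hyN => hsub hy.1 (hNF hyN)⟩

lemma dspace_nonneg (x y : Mink) : 0 ≤ dspace x y := norm_nonneg _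

lemma lightCone_eq_union (x : Mink) : lightCone x = Nplus x ∪ Nminus x := by
  ext y
  constructor
  · rintro ⟨hne, habs⟩
    rcases (abs_eq (dspace_nonneg x y)).mp habs with h | h
    · exact Or.inl ⟨hne, h⟩
    · exact Or.inr ⟨hne, by rw [h]; ring⟩
  · rintro (⟨hne, h⟩ | ⟨hne, h⟩)
    · refine ⟨hne, ?_⟩
      rw [abs_of_nonneg (h ▸ dspace_nonneg x y), h]
    · refine ⟨hne, ?_⟩
      have h0 : dtime x y ≤ 0 := by
        have := dspace_nonneg x y; linarith
      rw [abs_of_nonpos h0, ← h]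

lemma ztop_open_Nplus_compl (x : Mink) : Ztop.IsOpen (Nplus x)ᶜ := by
  refine ztop_open_compl x (Nplus x) {y : Mink | dtime x y = dspace x y}
    (fun y hy => hy.2)
    (isClosed_eq (continuous_fst.sub continuous_const)
      ((continuous_snd.sub continuous_const).norm))
    (fun y hy => ⟨hy.1, by rw [abs_of_nonneg (hy.2 ▸ dspace_nonneg x y)]; exact hy.2⟩) ?_
  intro y hy
  by_cases h : y = x
  · exact Or.inr h
  · exact Or.inl ⟨h, hy⟩

lemma ztop_open_Nminus_compl (x : Mink) : Ztop.IsOpen (Nminus x)ᶜ := by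
  refine ztop_open_compl x (Nminus x) {y : Mink | -dtime x y = dspace x y}
    (fun y hy => hy.2)
    (isClosed_eq ((continuous_fst.sub continuous_const).neg)
      ((continuous_snd.sub continuous_const).norm))
    (fun y hy => ⟨hy.1, by
      have h0 : dtime x y ≤ 0 := by have := hy.2 ▸ dspace_nonneg x y; linarith
      rw [abs_of_nonpos h0]; exact hy.2⟩) ?_
  intro y hy
  by_cases h : y = x
  · exact Or.inr h
  · exact Or.inl ⟨h, hy⟩

lemma ztop_le_thor : Ztop ≤ Thor := by
  apply le_generateFrom
  rintro S (⟨x, rfl⟩ | ⟨x, rfl⟩)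
  · rw [← Set.compl_eq_univ_diff]
    exact ztop_open_Nplus_compl x
  · rw [← Set.compl_eq_univ_diff]
    exact ztop_open_Nminus_compl x

lemma ztop_le_te : Ztop ≤ TE := by
  rw [TopologicalSpace.le_def]
  intro U hU
  apply ztop_isOpen_of
  intro p hp
  obtain ⟨δ, hδ, hsub⟩ := exists_eball_subset hU hp
  exact ⟨δ, hδ, fun y hy => hsub hy.1⟩

/-- The family of balls with the light cone of the centre removed is a topological basis,
and the topology `Z` it generates equals the intersection topology of `T^→` and the
Euclidean topology. -/
theorem ballsMinusLightCones_basis_and_Z_eq_intersection :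
    (⋃₀ BasisZ = Set.univ ∧
      ∀ S1 ∈ BasisZ, ∀ S2 ∈ BasisZ, ∀ p ∈ S1 ∩ S2, ∃ S ∈ BasisZ, p ∈ S ∧ S ⊆ S1 ∩ S2) ∧
    Ztop = TopologicalSpace.generateFrom
      {S : Set Mink | ∃ V U : Set Mink, Thor.IsOpen V ∧ TE.IsOpen U ∧ S = V ∩ U} := by
  constructor
  · constructor
    · ext p
      simp only [Set.mem_univ, iff_true, Set.mem_sUnion]
      exact ⟨eball p 1 \ lightCone p, ⟨p, 1, one_pos, rfl⟩,
        ⟨self_mem_eball one_pos, self_not_mem_lightCone p⟩⟩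
    · rintro S1 ⟨x1, ε1, hε1, rfl⟩ S2 ⟨x2, ε2, hε2, rfl⟩ p ⟨hp1, hp2⟩
      obtain ⟨δ1, hδ1, h1⟩ := key_shrink x1 ε1 p hp1
      obtain ⟨δ2, hδ2, h2⟩ := key_shrink x2 ε2 p hp2
      have hmin : 0 < min δ1 δ2 := lt_min hδ1 hδ2
      refine ⟨eball p (min δ1 δ2) \ lightCone p, ⟨p, min δ1 δ2, hmin, rfl⟩,
        ⟨self_mem_eball hmin, self_not_mem_lightCone p⟩, fun y hy => ?_⟩
      have hy1 : y ∈ eball p δ1 \ lightCone p :=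
        ⟨eball_mono (min_le_left _ _) hy.1, hy.2⟩
      have hy2 : y ∈ eball p δ2 \ lightCone p :=
        ⟨eball_mono (min_le_right _ _) hy.1, hy.2⟩
      exact ⟨h1 hy1, h2 hy2⟩
  · apply le_antisymm
    · apply le_generateFrom
      rintro S ⟨V, U, hV, hU, rfl⟩
      have hVZ : Ztop.IsOpen V := (TopologicalSpace.le_def.mp ztop_le_thor) V hV
      have hUZ : Ztop.IsOpen U := (TopologicalSpace.le_def.mp ztop_le_te) U hU
      exact @IsOpen.inter Mink Ztop V U hVZ hUZ
    · show TopologicalSpace.generateFrom _ ≤ TopologicalSpace.generateFrom BasisZ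
      apply le_generateFrom
      rintro S ⟨x, ε, hε, rfl⟩
      apply TopologicalSpace.GenerateOpen.basic
      refine ⟨(Nplus x)ᶜ ∩ (Nminus x)ᶜ, eball x ε, ?_, eball_isOpen x ε, ?_⟩
      · exact TopologicalSpace.GenerateOpen.inter _ _
          (.basic _ (Or.inl ⟨x, by rw [Set.compl_eq_univ_diff]⟩))
          (.basic _ (Or.inr ⟨x, by rw [Set.compl_eq_univ_diff]⟩))
      · rw [lightCone_eq_union]
        ext y
        simp only [Set.mem_diff, Set.mem_union, Set.mem_inter_iff, Set.mem_compl_iff]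
        tauto
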